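/- arXiv:1403.4796 — 4 statements merged into one kernel-verified Lean document; each statement's English description precedes it below -/
import Mathlib

section
/- For d ≥ 1 and k ≥ 0, letting a = (k+1)(k+2), b = d(2k+3+d), c = d(2k+3-d) (as integers), the formal power series identity (1-z^d)^3 · ∑_{i≥0} C(k+id+2, 2) z^{k+id} · 2 = z^k · a + z^{k+d} · (b - 2a) + z^{k+2d} · (a - c) holds. -/
/-!
The series is `X ^ k * H (X ^ d)` with `H = ∑ gᵢ Yⁱ`, `gᵢ = 2 * C(k + i d + 2, 2) =
(k + i d + 1) (k + i d + 2)`. As `g` is quadratic in `i`, its third forward difference vanishes, so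
`(1 - Y) ^ 3 * H = g₀ (1 - Y) ^ 2 + (Δg)₀ Y (1 - Y) + (Δ²g)₀ Y ^ 2` with `g₀ = a`, `(Δg)₀ = b` and
`(Δ²g)₀ = 2 d ^ 2`. Substituting `Y = X ^ d` gives the identity.
-/

open PowerSeries
open scoped fwdDiff

theorem one_sub_X_mul_mk {R : Type*} [Ring R] (g : ℕ → R) :
    (1 - X) * mk g = C (g 0) + X * mk (Δ_[1] g) := by
  ext (_ | n)
  · simp
  · simp [sub_mul, coeff_succ_X_mul, fwdDiff]

theorem one_sub_X_pow_three_mul_mk {R : Type*} [CommRing R] (g : ℕ → R)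
    (hg : (Δ_[1])^[3] g = 0) :
    (1 - X) ^ 3 * mk g
      = C (g 0) * (1 - X) ^ 2 + C (Δ_[1] g 0) * X * (1 - X) + C ((Δ_[1])^[2] g 0) * X ^ 2 := by
  have hmk : mk ((Δ_[1])^[3] g) = 0 := by
    ext
    simp [hg]
  simp only [Function.iterate_succ, Function.iterate_zero, Function.comp_apply, id] at hmk ⊢
  linear_combination (1 - X) ^ 2 * one_sub_X_mul_mk g + X * (1 - X) * one_sub_X_mul_mk (Δ_[1] g)
    + X ^ 2 * one_sub_X_mul_mk (Δ_[1] (Δ_[1] g)) + X ^ 3 * hmk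

theorem mk_ite_dvd_sub_eq_X_pow_mul_subst {R : Type*} [CommRing R] {d : ℕ} (hd : d ≠ 0)
    (k : ℕ) (f : ℕ → R) :
    mk (fun m => if k ≤ m ∧ d ∣ m - k then f m else 0)
      = X ^ k * subst (X ^ d : R⟦X⟧) (mk fun i => f (k + d * i)) := by
  ext n
  rw [coeff_mk, coeff_X_pow_mul', coeff_subst_X_pow hd]
  by_cases hkn : k ≤ n
  · simp only [hkn, true_and, coeff_mk, Algebra.algebraMap_self, RingHom.id_apply]
    split_ifs with hdvd
    · rw [Nat.mul_div_cancel' hdvd, Nat.add_sub_of_le hkn]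
    · rfl
  · simp [hkn]

theorem cast_choose_two_mul_two (m : ℕ) : ((m + 2).choose 2 : ℤ) * 2 = (m + 1) * (m + 2) := by
  have h := Nat.add_one_mul_choose_eq (m + 1) 1
  rw [Nat.choose_one_right] at h
  rw [mul_comm _ ((m : ℤ) + 2)]
  exact_mod_cast h.symm

theorem stmt3 (d k : ℕ) (hd : 1 ≤ d) :
    (1 - X ^ d) ^ 3 *
        PowerSeries.mk (fun m => if k ≤ m ∧ d ∣ (m - k) then ((m + 2).choose 2 : ℤ) else 0) * 2
      = X ^ k * C (((k : ℤ) + 1) * ((k : ℤ) + 2))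
        + X ^ (k + d) *
            C ((d : ℤ) * (2 * k + 3 + d) - 2 * (((k : ℤ) + 1) * ((k : ℤ) + 2)))
        + X ^ (k + 2 * d) *
            C (((k : ℤ) + 1) * ((k : ℤ) + 2) - (d : ℤ) * (2 * k + 3 - d)) := by
  have hd0 : d ≠ 0 := by omega
  set φ : ℤ⟦X⟧ →ₐ[ℤ] ℤ⟦X⟧ := substAlgHom (HasSubst.X_pow hd0)
  have hφX : φ X = X ^ d := substAlgHom_X _
  set g : ℕ → ℤ := fun i => ((k + d * i + 2).choose 2 : ℤ) * 2
  have hg (i : ℕ) : g i = ((k : ℤ) + d * i + 1) * (k + d * i + 2) := by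
    simp only [g, cast_choose_two_mul_two]
    push_cast
    ring
  have hseries : mk (fun m => if k ≤ m ∧ d ∣ (m - k) then ((m + 2).choose 2 : ℤ) else 0) * 2
      = X ^ k * φ (mk g) := by
    rw [coe_substAlgHom]
    convert mk_ite_dvd_sub_eq_X_pow_mul_subst hd0 k fun m => ((m + 2).choose 2 : ℤ) * 2 using 1
    ext n
    rw [← map_ofNat C 2, coeff_mul_C, coeff_mk, coeff_mk, ite_mul, zero_mul]
  have hquad : (Δ_[1])^[3] g = 0 := by
    funext i
    simp only [Function.iterate_succ, Function.iterate_zero, Function.comp_apply, id, fwdDiff, hg,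
      Nat.cast_add, Nat.cast_one, Pi.zero_apply]
    ring
  rw [mul_assoc, hseries, mul_left_comm, ← hφX, ← map_one φ, ← map_sub, ← map_pow, ← map_mul,
    one_sub_X_pow_three_mul_mk g hquad]
  simp only [Function.iterate_succ, Function.iterate_zero, Function.comp_apply, id, fwdDiff, hg,
    map_add, map_mul, map_sub, map_pow, map_one, hφX, map_natCast, map_ofNat,
    map_zero, Nat.cast_zero]
  ring
end

section
/- For n ≥ 1, d ≥ 1, k ≥ 0, the formal power series identity: (n-1)! · ∑_{i≥0} C(k+id+n-1, n-1) z^{k+id} equals the (n-1)-st derivative of z^{k+n-1}/(1-z^d), i.e., (n-1)! · HS(S_{n,d,k}; z) = d^{n-1}/dz^{n-1} [ z^{k+n-1} · ∑_{j≥0} z^{jd} ]. -/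
/-! Comparing coefficients of `z^m`: the `j`-th derivative sends `z^(m+j)` to
`(m+1)⋯(m+j) z^m = j! C(m+j, j) z^m`, and `z^(m+j)` occurs in `z^(k+j)/(1-z^d)` exactly when
`k ≤ m` and `d ∣ m - k`. -/

open PowerSeries

/-- Hilbert series of the Veronese module `S_{n,d,k}`:
`∑_{i≥0} C(k+id+n-1, n-1) z^{k+id}`. -/
noncomputable def veroneseHS (n d k : ℕ) : PowerSeries ℚ :=
  PowerSeries.mk fun m => if k ≤ m ∧ d ∣ (m - k) then ((m + n - 1).choose (n - 1) : ℚ) else 0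

theorem PowerSeries.coeff_add_X_pow_add_mul {R : Type*} [Semiring R] (f : R⟦X⟧) (k j m : ℕ) :
    coeff (m + j) (X ^ (k + j) * f) = if k ≤ m then coeff (m - k) f else 0 := by
  rw [coeff_X_pow_mul']
  simp only [Nat.add_le_add_iff_right, Nat.add_sub_add_right]

theorem stmt5_general (n d k : ℕ) (hn : 1 ≤ n) :
    ((n - 1).factorial : ℚ) • veroneseHS n d k
      = (⇑(d⁄dX ℚ))^[n - 1]
          (X ^ (k + n - 1) * PowerSeries.mk fun m => if d ∣ m then (1 : ℚ) else 0) := by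
  obtain ⟨j, rfl⟩ : ∃ j, n = j + 1 := ⟨n - 1, by omega⟩
  ext m
  rw [Nat.add_sub_cancel, Nat.add_sub_assoc hn, Nat.add_sub_cancel, coeff_iterate_derivative,
    coeff_add_X_pow_add_mul, Nat.ascFactorial_eq_factorial_mul_choose]
  simp only [veroneseHS, coeff_smul, coeff_mk, Nat.add_sub_assoc hn, Nat.add_sub_cancel,
    smul_eq_mul, Nat.cast_mul]
  by_cases hk : k ≤ m <;> by_cases hdk : d ∣ m - k <;> simp [hk, hdk]

theorem stmt5 (n d k : ℕ) (hn : 1 ≤ n) (hd : 1 ≤ d) :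
    ((n - 1).factorial : ℚ) • veroneseHS n d k
      = (⇑(d⁄dX ℚ))^[n - 1]
          (X ^ (k + n - 1) * PowerSeries.mk fun m => if d ∣ m then (1 : ℚ) else 0) :=
  stmt5_general n d k hn
end

section
/- Let n ≥ 1, d ≥ 1, and let A = {a ∈ ℕ^n : a_1+...+a_n = d}. For c ∈ ℤ^n, define the pile simplicial complex Γ_c = {F ⊆ A : ∑_{a∈F} a ≤ c componentwise}. If k ≥ 1, i ≥ 2, and c ∈ ℕ^n with |c| = k + i·d, then any two elements v, w of A with v, w ≤ c (i.e., any two vertices of Γ_c) are connected in the 1-skeleton of Γ_c: there is a sequence of vertices from v to w such that consecutive vertices form an edge of Γ_c (their sum is ≤ c componentwise). -/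
/-!
Walk from `v` towards `w` one unit at a time: if `v ≠ w`, pick `v j > w j` and `v l < w l` and
move one unit of `v` from coordinate `j` to `l`, giving `v'`. Both `v` and `v'` lie below
`m = v + e_l ≤ c`, and since `|c| ≥ 2d + 1` the vector `c - m` has degree at least `d`, so it
dominates some degree `d` vector `u`, which is a common neighbour of `v` and `v'`.
-/

open Finset Relation

theorem Relation.reflTransGen_of_descent {α : Type*} {r : α → α → Prop} {S : Set α}
    (f : α → ℕ) {b : α}
    (h : ∀ a ∈ S, a ≠ b → ∃ a' ∈ S, ReflTransGen r a a' ∧ f a' < f a)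
    (a : α) (ha : a ∈ S) : ReflTransGen r a b := by
  by_cases hab : a = b
  · exact hab ▸ .refl
  obtain ⟨a', ha', haa', hf⟩ := h a ha hab
  exact haa'.trans (reflTransGen_of_descent f h a' ha')
termination_by f a

section Pile

variable {ι : Type*} [Fintype ι]

lemma exists_lt_and_lt_of_sum_eq {a b : ι → ℕ} (hsum : ∑ j, a j = ∑ j, b j) (hne : a ≠ b) :
    ∃ j l, b j < a j ∧ a l < b l := by
  have key : ∀ {a b : ι → ℕ}, ∑ j, a j = ∑ j, b j → a ≠ b → ∃ l, a l < b l := by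
    intro a b hsum hne
    by_contra! hba
    exact hne (funext fun j =>
      ((sum_eq_sum_iff_of_le fun x _ => hba x).1 hsum.symm j (mem_univ j)).symm)
  obtain ⟨j, hj⟩ := key hsum.symm hne.symm
  obtain ⟨l, hl⟩ := key hsum hne
  exact ⟨j, l, hj, hl⟩

variable [DecidableEq ι]

lemma exists_le_sum_eq (t : ι → ℕ) {m : ℕ} (hm : m ≤ ∑ j, t j) :
    ∃ u ≤ t, ∑ j, u j = m := by
  induction m with
  | zero => exact ⟨0, fun _ => Nat.zero_le _, by simp⟩
  | succ m ih =>
    obtain ⟨u, hut, hu⟩ := ih (by omega)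
    obtain ⟨x, -, hx⟩ := exists_lt_of_sum_lt (s := univ) (f := u) (g := t) (by omega)
    refine ⟨u + Pi.single x 1, fun j => ?_, ?_⟩
    · rcases eq_or_ne j x with rfl | hj
      · simpa using hx
      · simpa [hj] using hut j
    · simp [sum_add_distrib, hu]

/-- The adjacency relation of the 1-skeleton of the pile complex `Γ_c` on degree `d` vectors. -/
def PileAdj (c : ι → ℕ) (d : ℕ) (a b : ι → ℕ) : Prop :=
  (∑ j, a j = d) ∧ (∑ j, b j = d) ∧ ∀ j, a j + b j ≤ c j

lemma reflTransGen_pileAdj_of_le {c m a b : ι → ℕ} {d : ℕ} (ha : ∑ j, a j = d)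
    (hb : ∑ j, b j = d) (ham : a ≤ m) (hbm : b ≤ m) (hmc : m ≤ c)
    (hdeg : ∑ j, m j + d ≤ ∑ j, c j) : ReflTransGen (PileAdj c d) a b := by
  obtain ⟨u, huc, hu⟩ := exists_le_sum_eq (c - m) (m := d) (by
    rw [Pi.sub_def, sum_tsub_distrib _ fun x _ => hmc x]
    omega)
  have hmu (j : ι) : m j + u j ≤ c j := by
    have : u j ≤ c j - m j := huc j
    have : m j ≤ c j := hmc j
    omega
  refine .head ⟨ha, hu, fun j => ?_⟩ (.single ⟨hu, hb, fun j => ?_⟩)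
  · have : a j ≤ m j := ham j
    linarith [hmu j]
  · have : b j ≤ m j := hbm j
    linarith [hmu j]

lemma reflTransGen_pileAdj_add_single {c a : ι → ℕ} {d : ℕ} {j l : ι}
    (hc : 2 * d + 1 ≤ ∑ x, c x) (ha : ∑ x, (a + Pi.single j 1 : ι → ℕ) x = d)
    (hac : a + Pi.single j 1 + Pi.single l 1 ≤ c) :
    ReflTransGen (PileAdj c d) (a + Pi.single j 1) (a + Pi.single l 1) := by
  have ha' : ∑ x, (a + Pi.single l 1 : ι → ℕ) x = d := by simpa [sum_add_distrib] using ha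
  refine reflTransGen_pileAdj_of_le ha ha' le_self_add
    (add_right_comm a (Pi.single l 1) (Pi.single j 1) ▸ le_self_add) hac ?_
  simp only [Pi.add_apply, sum_add_distrib, sum_pi_single', mem_univ, if_true] at ha ⊢
  omega

lemma exists_pileAdj_closer {c a b : ι → ℕ} {d : ℕ} (hc : 2 * d + 1 ≤ ∑ j, c j)
    (ha : ∑ j, a j = d) (hac : a ≤ c) (hb : ∑ j, b j = d) (hbc : b ≤ c) (hab : a ≠ b) :
    ∃ a', (∑ j, a' j = d ∧ a' ≤ c) ∧ ReflTransGen (PileAdj c d) a a' ∧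
      ∑ j, (b j - a' j) < ∑ j, (b j - a j) := by
  obtain ⟨j, l, hj, hl⟩ := exists_lt_and_lt_of_sum_eq (ha.trans hb.symm) hab
  have hjl : j ≠ l := by rintro rfl; omega
  obtain ⟨a₀, rfl⟩ : ∃ a₀, a = a₀ + Pi.single j 1 :=
    ⟨a - Pi.single j 1, (tsub_add_cancel_of_le fun x => by
      rcases eq_or_ne x j with rfl | hx
      · simpa using Nat.one_le_of_lt hj
      · simp [hx]).symm⟩
  simp only [Pi.add_apply, Pi.single_apply, if_pos, if_neg hjl.symm] at hj hl
  have hm : a₀ + Pi.single j 1 + Pi.single l 1 ≤ c := fun x => by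
    have hax : (a₀ + Pi.single j 1 : ι → ℕ) x ≤ c x := hac x
    have hbx : b x ≤ c x := hbc x
    simp only [Pi.add_apply, Pi.single_apply] at hax ⊢
    split_ifs at hax ⊢ <;> subst_vars <;> omega
  have hle : a₀ + Pi.single l 1 ≤ a₀ + Pi.single j 1 + Pi.single l 1 :=
    add_right_comm a₀ (Pi.single l 1) (Pi.single j 1) ▸ le_self_add
  refine ⟨a₀ + Pi.single l 1, ⟨by simpa [sum_add_distrib] using ha, hle.trans hm⟩,
    reflTransGen_pileAdj_add_single hc ha hm, ?_⟩
  refine sum_lt_sum (fun x _ => ?_) ⟨l, mem_univ l, ?_⟩ <;>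
    simp only [Pi.add_apply, Pi.single_apply] <;> split_ifs <;> subst_vars <;> omega

theorem reflTransGen_pileAdj {c v w : ι → ℕ} {d : ℕ} (hc : 2 * d + 1 ≤ ∑ j, c j)
    (hv : ∑ j, v j = d ∧ v ≤ c) (hw : ∑ j, w j = d ∧ w ≤ c) :
    ReflTransGen (PileAdj c d) v w :=
  reflTransGen_of_descent (S := {a | ∑ j, a j = d ∧ a ≤ c}) (fun a => ∑ j, (w j - a j))
    (fun _ ha hne => exists_pileAdj_closer hc ha.1 ha.2 hw.1 hw.2 hne) v hv

end Pile

theorem stmt8_general (n d k i : ℕ) (hk : 1 ≤ k) (hi : 2 ≤ i)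
    (c : Fin n → ℕ) (hc : ∑ j, c j = k + i * d)
    (v w : Fin n → ℕ) (hv : ∑ j, v j = d) (hw : ∑ j, w j = d)
    (hvc : ∀ j, v j ≤ c j) (hwc : ∀ j, w j ≤ c j) :
    Relation.ReflTransGen
      (fun a b : Fin n → ℕ =>
        (∑ j, a j = d) ∧ (∑ j, b j = d) ∧ ∀ j, a j + b j ≤ c j) v w := by
  have hcd : 2 * d + 1 ≤ ∑ j, c j := by
    have := Nat.mul_le_mul_right d hi
    omega
  exact reflTransGen_pileAdj hcd ⟨hv, hvc⟩ ⟨hw, hwc⟩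

theorem stmt8 (n d k i : ℕ) (hn : 1 ≤ n) (hd : 1 ≤ d) (hk : 1 ≤ k) (hi : 2 ≤ i)
    (c : Fin n → ℕ) (hc : ∑ j, c j = k + i * d)
    (v w : Fin n → ℕ) (hv : ∑ j, v j = d) (hw : ∑ j, w j = d)
    (hvc : ∀ j, v j ≤ c j) (hwc : ∀ j, w j ≤ c j) :
    Relation.ReflTransGen
      (fun a b : Fin n → ℕ =>
        (∑ j, a j = d) ∧ (∑ j, b j = d) ∧ ∀ j, a j + b j ≤ c j) v w :=
  stmt8_general n d k i hk hi c hc v w hv hw hvc hwc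
end

section
/- Let n ≥ 2, d ≥ 1, k ≥ d, A = {a ∈ ℕ^n : |a|=d}, N = C(d+n-1,d), and let s = k+(N-1)d, write s = mn + r with 0 ≤ r < n, and let c = m·(1,...,1) + (1,...,1,0,...,0) with r ones. Then for every subset F ⊆ A with |F| = N−1, ∑_{a∈F} a ≤ c componentwise. -/
/-!
By the symmetry of `A = {a ∈ ℕⁿ : |a| = d}` under permuting coordinates, every coordinate has the
same column sum over `A`, so `n · ∑_{a ∈ A} a_j = |A| · d = N d`. A subset `F ⊆ A` has smaller
column sums, and `N d ≤ k + (N - 1) d` because `d ≤ k`, so `∑_{a ∈ F} a_j ≤ ⌊s / n⌋ ≤ c_j`.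
-/

open Finset

namespace Finset.Nat

theorem card_antidiagonalTuple (n d : ℕ) :
    #(antidiagonalTuple n d) = (n + d - 1).choose d := by
  rw [← piAntidiag_univ_fin_eq_antidiagonalTuple, ← map_sym_eq_piAntidiag, card_map, sym_univ,
    card_univ, Sym.card_sym_eq_choose, Fintype.card_fin]

theorem sum_antidiagonalTuple_apply_eq (n d : ℕ) (i j : Fin n) :
    ∑ a ∈ antidiagonalTuple n d, a i = ∑ a ∈ antidiagonalTuple n d, a j := by
  refine sum_equiv ((Equiv.swap i j).arrowCongr (Equiv.refl ℕ)) (fun a => ?_) (fun a _ => ?_)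
  · simp [mem_antidiagonalTuple, Function.comp_def, Equiv.sum_comp (Equiv.swap i j) a]
  · simp [Function.comp_def]

theorem mul_sum_antidiagonalTuple_apply (n d : ℕ) (j : Fin n) :
    n * ∑ a ∈ antidiagonalTuple n d, a j = #(antidiagonalTuple n d) * d := by
  calc n * ∑ a ∈ antidiagonalTuple n d, a j
      = ∑ i : Fin n, ∑ a ∈ antidiagonalTuple n d, a i := by
        simp [sum_antidiagonalTuple_apply_eq n d _ j]
    _ = ∑ a ∈ antidiagonalTuple n d, ∑ i, a i := sum_comm
    _ = #(antidiagonalTuple n d) * d := by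
        rw [sum_congr rfl fun a ha => mem_antidiagonalTuple.mp ha, sum_const, smul_eq_mul]

theorem mul_sum_apply_le_of_subset_antidiagonalTuple {n d : ℕ} {F : Finset (Fin n → ℕ)}
    (hF : F ⊆ antidiagonalTuple n d) (j : Fin n) :
    n * ∑ a ∈ F, a j ≤ (n + d - 1).choose d * d := by
  rw [← card_antidiagonalTuple, ← mul_sum_antidiagonalTuple_apply n d j]
  exact Nat.mul_le_mul_left n (sum_le_sum_of_subset hF)

end Finset.Nat

theorem stmt17_general (n d k : ℕ) (hk : d ≤ k)
    (N : ℕ) (hN : N = (d + n - 1).choose d)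
    (c : Fin n → ℕ)
    (hc : ∀ j : Fin n, c j = (k + (N - 1) * d) / n
      + (if (j : ℕ) < (k + (N - 1) * d) % n then 1 else 0))
    (F : Finset (Fin n → ℕ)) (hF : F ⊆ Finset.Nat.antidiagonalTuple n d) :
    ∀ j, (∑ a ∈ F, a j) ≤ c j := by
  intro j
  have hcol := Nat.mul_sum_apply_le_of_subset_antidiagonalTuple hF j
  rw [add_comm n d, ← hN] at hcol
  have hNd : N * d ≤ k + (N - 1) * d := by
    rcases N with _ | N
    · simp
    · simpa [Nat.succ_mul, add_comm] using hk
  calc ∑ a ∈ F, a j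
      ≤ (k + (N - 1) * d) / n :=
        (Nat.le_div_iff_mul_le j.pos).mpr (by linarith [mul_comm n (∑ a ∈ F, a j)])
    _ ≤ c j := hc j ▸ Nat.le_add_right _ _

theorem stmt17 (n d k : ℕ) (hn : 2 ≤ n) (hd : 1 ≤ d) (hk : d ≤ k)
    (N : ℕ) (hN : N = (d + n - 1).choose d)
    (c : Fin n → ℕ)
    (hc : ∀ j : Fin n, c j = (k + (N - 1) * d) / n
      + (if (j : ℕ) < (k + (N - 1) * d) % n then 1 else 0))
    (F : Finset (Fin n → ℕ)) (hF : F ⊆ Finset.Nat.antidiagonalTuple n d)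
    (hcard : F.card = N - 1) :
    ∀ j, (∑ a ∈ F, a j) ≤ c j :=
  stmt17_general n d k hk N hN c hc F hF
end
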